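/- arXiv:2511.16488 — 3 statements merged into one kernel-verified Lean document; each statement's English description precedes it below -/
import Mathlib

section
/- Completeness of EN with respect to finite neighborhood frames: for every modal formula A, if A is valid in every finite EN-frame (i.e., every EN-frame whose set of worlds is finite), then A is derivable in the logic EN. -/
/-- Modal formulas: propositional variables, ⊥, ¬, ∧, ∨, →, □. -/
inductive MF : Type
  | var : ℕ → MF
  | bot : MF
  | neg : MF → MF
  | and : MF → MF → MF
  | or : MF → MF → MF
  | imp : MF → MF → MF
  | box : MF → MF

/-- Defined biconditional A ↔ B := (A → B) ∧ (B → A). -/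
def MF.iff (A B : MF) : MF := (A.imp B).and (B.imp A)

/-- Propositional evaluation: variables and boxed formulas are treated as atoms. -/
def MF.peval (v : MF → Bool) : MF → Bool
  | .var n => v (.var n)
  | .bot => false
  | .neg A => !(A.peval v)
  | .and A B => A.peval v && B.peval v
  | .or A B => A.peval v || B.peval v
  | .imp A B => !(A.peval v) || B.peval v
  | .box A => v A.box

/-- A is a propositional tautology. -/
def MF.Tautology (A : MF) : Prop := ∀ v : MF → Bool, A.peval v = true

/-- The logic EN: propositional tautologies, modus ponens, necessitation, RE. -/
inductive EN : MF → Prop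
  | taut {A : MF} : A.Tautology → EN A
  | mp {A B : MF} : EN (A.imp B) → EN A → EN B
  | nec {A : MF} : EN A → EN A.box
  | re {A B : MF} : EN (A.iff B) → EN (A.box.iff B.box)

/-- An EN-frame: a (nonempty) set of worlds `W` together with a neighborhood
function `N` such that the whole universe is a neighborhood of every world. -/
structure ENFrame (W : Type*) where
  N : W → Set (Set W)
  univ_mem : ∀ x : W, (Set.univ : Set W) ∈ N x

/-- The truth set of a modal formula in a model (frame + valuation). -/
def ENFrame.truth {W : Type*} (F : ENFrame W) (val : ℕ → Set W) : MF → Set W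
  | .var n => val n
  | .bot => ∅
  | .neg A => (F.truth val A)ᶜ
  | .and A B => F.truth val A ∩ F.truth val B
  | .or A B => F.truth val A ∪ F.truth val B
  | .imp A B => {x | x ∈ F.truth val A → x ∈ F.truth val B}
  | .box A => {x | F.truth val A ∈ F.N x}

/-- A formula is valid in a frame if it is valid (true at every world) in
every model on that frame. -/
def ENFrame.Valid {W : Type*} (F : ENFrame W) (A : MF) : Prop :=
  ∀ val : ℕ → Set W, F.truth val A = Set.univ

/-- ENP-frame condition: the empty set is never a neighborhood. -/
def ENFrame.IsENP {W : Type*} (F : ENFrame W) : Prop :=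
  ∀ x : W, (∅ : Set W) ∉ F.N x

/-- END-frame condition: no set is a neighborhood together with its complement. -/
def ENFrame.IsEND {W : Type*} (F : ENFrame W) : Prop :=
  ∀ (x : W) (V : Set W), V ∈ F.N x → Vᶜ ∉ F.N x

/-- ECN-frame condition: neighborhoods are closed under intersection. -/
def ENFrame.IsECN {W : Type*} (F : ENFrame W) : Prop :=
  ∀ (x : W) (U V : Set W), U ∈ F.N x → V ∈ F.N x → U ∩ V ∈ F.N x
/-!
Filtration of the canonical model through a finite set `S` of formulas. A world is a Boolean
valuation of the formulas of `S` that makes `□B` true whenever `B` is a theorem and gives `□B`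
and `□C` the same value whenever `B ↔ C` is a theorem. Only finitely many theorems enter this
condition, so a formula true at every world follows propositionally from finitely many theorems
and is itself a theorem. The neighborhoods of `x` are `univ` and the truth sets of those `B`
with `□B` true at `x`; by the two conditions on worlds, whether the truth set of `B` is a
neighborhood of `x` is then decided by the value of `□B` at `x`.
-/

deriving instance DecidableEq for MF

namespace MF

def subformulas : MF → Finset MF
  | var n => {var n}
  | bot => {bot}
  | neg B => insert (neg B) B.subformulas
  | and B C => insert (and B C) (B.subformulas ∪ C.subformulas)
  | or B C => insert (or B C) (B.subformulas ∪ C.subformulas)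
  | imp B C => insert (imp B C) (B.subformulas ∪ C.subformulas)
  | box B => insert (box B) B.subformulas

theorem peval_congr {v w : MF → Bool} :
    ∀ {B : MF}, (∀ E ∈ B.subformulas, v E = w E) → B.peval v = B.peval w
  | var n, h | box B, h => h _ (by simp [subformulas])
  | bot, _ => rfl
  | neg B, h => by
    simp only [peval, peval_congr (B := B) fun E hE => h E (by simp [subformulas, hE])]
  | and B C, h | or B C, h | imp B C, h => by
    simp only [peval, peval_congr (B := B) fun E hE => h E (by simp [subformulas, hE]),
      peval_congr (B := C) fun E hE => h E (by simp [subformulas, hE])]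

theorem peval_iff (v : MF → Bool) (B C : MF) :
    (B.iff C).peval v = true ↔ B.peval v = C.peval v := by
  cases hB : B.peval v <;> cases hC : C.peval v <;> simp [MF.iff, peval, hB, hC]

end MF

namespace EN

theorem of_forall_peval {Γ : Finset MF} (hΓ : ∀ G ∈ Γ, EN G) {B : MF}
    (h : ∀ v, (∀ G ∈ Γ, G.peval v = true) → B.peval v = true) : EN B := by
  induction Γ using Finset.induction_on generalizing B with
  | empty => exact taut fun v => h v (by simp)
  | insert G Γ _ ih =>
    refine mp (ih (fun G' hG' => hΓ G' (by simp [hG'])) fun v hv => ?_) (hΓ G (by simp))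
    cases hG : G.peval v
    · simp [MF.peval, hG]
    · simpa [MF.peval, hG] using h v (by simpa [hG] using hv)

theorem iff_of_iff {B C : MF} (h : EN (B.iff C)) : EN B ↔ EN C :=
  ⟨fun hB => of_forall_peval (Γ := {B.iff C, B}) (by simp [h, hB]) fun v hv => by
      simpa [← (MF.peval_iff v B C).mp (hv _ (by simp))] using hv B (by simp),
    fun hC => of_forall_peval (Γ := {B.iff C, C}) (by simp [h, hC]) fun v hv => by
      simpa [(MF.peval_iff v B C).mp (hv _ (by simp))] using hv C (by simp)⟩

end EN

namespace FiniteCanonical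

variable (S : Finset MF)

def Good (v : MF → Bool) : Prop :=
  (∀ B : MF, B.box ∈ S → EN B → v B.box = true) ∧
    ∀ B C : MF, B.box ∈ S → C.box ∈ S → EN (B.iff C) → v B.box = v C.box

open scoped Classical in
noncomputable def theorems : Finset MF :=
  (S ∪ (S ×ˢ S).image fun p => p.1.iff p.2).filter EN

variable {S}

theorem good_of_forall_theorems {v : MF → Bool}
    (hv : ∀ G ∈ theorems S, G.peval v = true) : Good S v := by
  refine ⟨fun B hB hEN => hv B.box ?_, fun B C hB hC hEN => ?_⟩
  · simpa [theorems, hB] using EN.nec hEN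
  · refine (MF.peval_iff v B.box C.box).mp (hv _ ?_)
    simpa [theorems] using ⟨Or.inr ⟨B.box, C.box, ⟨hB, hC⟩, rfl⟩, EN.re hEN⟩

open scoped Classical in
theorem EN_of_forall_good {D : MF} (h : ∀ v, Good S v → D.peval v = true) : EN D :=
  EN.of_forall_peval (Γ := theorems S) (fun _ hG => (Finset.mem_filter.mp hG).2)
    fun v hv => h v (good_of_forall_theorems hv)

open scoped Classical in
theorem good_decide_EN : Good S fun D => decide (EN D) := by
  refine ⟨fun B _ hB => by simpa using EN.nec hB, fun B C _ _ h => ?_⟩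
  simpa using (EN.re h).iff_of_iff

variable (S)

def World : Type := {v : MF → Bool // Good S v ∧ ∀ B ∉ S, v B = false}

variable {S}

open scoped Classical in
def World.ofGood {v : MF → Bool} (hv : Good S v) : World S :=
  ⟨fun B => B ∈ S && v B,
    ⟨fun B hB hEN => by simp [hB, hv.1 B hB hEN], fun B C hB hC hEN => by
      simp [hB, hC, hv.2 B C hB hC hEN]⟩,
    fun B hB => by simp [hB]⟩

theorem World.peval_ofGood {v : MF → Bool} (hv : Good S v) {B : MF}
    (hB : B.subformulas ⊆ S) : B.peval (World.ofGood hv).1 = B.peval v :=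
  MF.peval_congr fun E hE => by simp [World.ofGood, hB hE]

theorem World.mem_of_apply_eq_true (x : World S) {B : MF} (h : x.1 B = true) : B ∈ S :=
  by_contra fun hB => by simp [x.2.2 B hB] at h

instance : Nonempty (World S) := ⟨.ofGood good_decide_EN⟩

instance : Finite (World S) :=
  Finite.of_injective (fun x (B : S) => x.1 B) fun x y h => Subtype.ext <| funext fun B => by
    by_cases hB : B ∈ S
    · exact congrFun h ⟨B, hB⟩
    · rw [x.2.2 B hB, y.2.2 B hB]

variable (S)

def truthSet (B : MF) : Set (World S) := {x | B.peval x.1 = true}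

def frame : ENFrame (World S) where
  N x := {V | V = Set.univ ∨ ∃ B, B.subformulas ⊆ S ∧ x.1 B.box = true ∧ truthSet S B = V}
  univ_mem _ := Or.inl rfl

def val (n : ℕ) : Set (World S) := truthSet S (.var n)

variable {S}

theorem EN_of_truthSet_eq_univ {B : MF} (hB : B.subformulas ⊆ S)
    (h : truthSet S B = Set.univ) : EN B :=
  EN_of_forall_good fun v hv => by
    rw [← World.peval_ofGood hv hB]
    exact Set.eq_univ_iff_forall.mp h (World.ofGood hv)

theorem EN_iff_of_truthSet_eq {B C : MF} (hB : B.subformulas ⊆ S) (hC : C.subformulas ⊆ S)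
    (h : truthSet S B = truthSet S C) : EN (B.iff C) :=
  EN_of_forall_good fun v hv => by
    rw [MF.peval_iff, ← World.peval_ofGood hv hB, ← World.peval_ofGood hv hC]
    exact Bool.eq_iff_iff.mpr (Set.ext_iff.mp h (World.ofGood hv))

theorem truth_eq_truthSet : ∀ {B : MF}, B.subformulas ⊆ S →
    (frame S).truth (val S) B = truthSet S B
  | .var _, _ => rfl
  | .bot, _ => by ext; simp [ENFrame.truth, truthSet, MF.peval]
  | .neg B, h => by
    simp only [MF.subformulas, Finset.insert_subset_iff] at h
    ext
    simp [ENFrame.truth, truthSet, MF.peval, truth_eq_truthSet h.2]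
  | .and B C, h | .or B C, h | .imp B C, h => by
    simp only [MF.subformulas, Finset.insert_subset_iff, Finset.union_subset_iff] at h
    ext
    simp [ENFrame.truth, truthSet, MF.peval, truth_eq_truthSet h.2.1, truth_eq_truthSet h.2.2,
      imp_iff_not_or]
  | .box B, h => by
    simp only [MF.subformulas, Finset.insert_subset_iff] at h
    obtain ⟨hBS, hB⟩ := h
    ext x
    change (frame S).truth (val S) B ∈ (frame S).N x ↔ x.1 B.box = true
    rw [truth_eq_truthSet hB]
    constructor
    · rintro (huniv | ⟨C, hC, hCx, hCB⟩)
      · exact x.2.1.1 B hBS (EN_of_truthSet_eq_univ hB huniv)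
      · rw [← hCx, x.2.1.2 B C hBS (x.mem_of_apply_eq_true hCx)
          (EN_iff_of_truthSet_eq hB hC hCB.symm)]
    · exact fun hx => Or.inr ⟨B, hB, hx, rfl⟩

end FiniteCanonical

/-- Completeness of EN with respect to finite EN-frames. -/
theorem EN_completeness (A : MF)
    (h : ∀ (W : Type) [Nonempty W] [Finite W] (F : ENFrame W), F.Valid A) :
    EN A := by
  open FiniteCanonical in
  have hA : A.subformulas ⊆ A.subformulas := subset_rfl
  have hvalid := h _ (frame A.subformulas) (val A.subformulas)
  rw [truth_eq_truthSet hA] at hvalid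
  exact EN_of_truthSet_eq_univ hA hvalid
end

section
/- Completeness of ENP with respect to finite neighborhood frames: for every modal formula A, if A is valid in every finite ENP-frame (i.e., every ENP-frame whose set of worlds is finite), then A is derivable in the logic ENP. -/
/-- The logic ENP: EN plus the axiom ¬□⊥. -/
inductive ENP : MF → Prop
  | taut {A : MF} : A.Tautology → ENP A
  | axP : ENP MF.bot.box.neg
  | mp {A B : MF} : ENP (A.imp B) → ENP A → ENP B
  | nec {A : MF} : ENP A → ENP A.box
  | re {A B : MF} : ENP (A.iff B) → ENP (A.box.iff B.box)

/-!
Finite canonical model. Let `L` be the atoms of `A`: its variables and boxed subformulas.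
The worlds are the truth assignments to `L` whose state description is ENP-consistent; a
formula over `L` true at every world is provable, since `⊢ B` follows from `⊢ χ_v → B` for all
state descriptions `χ_v`. The neighbourhoods of `x` are `univ` and the truth sets of the `B`
with `□B ∈ L` true at `x`; by necessitation and RE, the truth set of `C` is a neighbourhood of `x`
exactly when `□C` is true at `x`, which is the truth lemma. A neighbourhood `∅ = ‖C‖` would give
`⊢ □C ↔ □⊥`, contradicting `¬□⊥`. So a formula valid in every finite ENP-frame holds at every
world of this one, and is therefore provable.
-/

namespace MF

def atoms : MF → List MF
  | .var n => [.var n]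
  | .bot => []
  | .neg A => A.atoms
  | .and A B => A.atoms ++ B.atoms
  | .or A B => A.atoms ++ B.atoms
  | .imp A B => A.atoms ++ B.atoms
  | .box A => .box A :: A.atoms

theorem peval_of_mem_atoms {B C : MF} (hC : C ∈ B.atoms) (u : MF → Bool) :
    C.peval u = u C := by
  induction B with
  | var n => simp only [atoms, List.mem_singleton] at hC; subst hC; rfl
  | bot => simp [atoms] at hC
  | neg A ih => exact ih hC
  | and A B ih₁ ih₂ | or A B ih₁ ih₂ | imp A B ih₁ ih₂ =>
    rcases List.mem_append.1 hC with h | h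
    exacts [ih₁ h, ih₂ h]
  | box A ih =>
    rcases List.mem_cons.1 hC with rfl | h
    exacts [rfl, ih h]

theorem peval_congr_s3 {B : MF} {u w : MF → Bool} (h : ∀ C ∈ B.atoms, u C = w C) :
    B.peval u = B.peval w := by
  induction B with
  | var n => exact h _ (List.mem_singleton_self _)
  | bot => rfl
  | neg A ih => simp only [peval, ih h]
  | and A B ih₁ ih₂ | or A B ih₁ ih₂ | imp A B ih₁ ih₂ =>
    simp only [peval, ih₁ fun C hC => h C (List.mem_append_left _ hC),
      ih₂ fun C hC => h C (List.mem_append_right _ hC)]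
  | box A => exact h _ List.mem_cons_self

theorem atoms_iff_subset {A B : MF} {L : List MF} :
    (A.iff B).atoms ⊆ L ↔ A.atoms ⊆ L ∧ B.atoms ⊆ L := by
  simp only [MF.iff, atoms, List.append_subset]
  tauto

@[simp]
theorem peval_iff_eq_true {A B : MF} {u : MF → Bool} :
    (A.iff B).peval u = true ↔ A.peval u = B.peval u := by
  simp only [MF.iff, peval]
  cases A.peval u <;> cases B.peval u <;> decide

def stateDesc (v : MF → Bool) : List MF → MF
  | [] => MF.bot.neg
  | C :: L => (cond (v C) C C.neg).and (stateDesc v L)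

theorem peval_stateDesc {v u : MF → Bool} {L : List MF} :
    (stateDesc v L).peval u = true ↔ ∀ C ∈ L, C.peval u = v C := by
  induction L with
  | nil => simp [stateDesc, peval]
  | cons C L ih =>
    simp only [stateDesc, peval, Bool.and_eq_true, ih, List.forall_mem_cons]
    cases v C <;> simp [peval]

theorem stateDesc_congr {u v : MF → Bool} {L : List MF} (h : ∀ C ∈ L, u C = v C) :
    stateDesc u L = stateDesc v L := by
  induction L with
  | nil => rfl
  | cons C L ih =>
    simp only [stateDesc, h C List.mem_cons_self, ih fun D hD => h D (List.mem_cons_of_mem _ hD)]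

theorem peval_eq_of_peval_stateDesc {v u : MF → Bool} {L : List MF} {B : MF}
    (hu : (stateDesc v L).peval u = true) (hB : B.atoms ⊆ L) : B.peval u = B.peval v :=
  peval_congr_s3 fun C hC => (peval_of_mem_atoms hC u).symm.trans (peval_stateDesc.1 hu C (hB hC))

end MF

def BoxClosed (L : List MF) : Prop := ∀ C : MF, C.box ∈ L → C.atoms ⊆ L

theorem MF.boxClosed_atoms (B : MF) : BoxClosed B.atoms := by
  intro C hC
  induction B with
  | var n => simp [atoms] at hC
  | bot => simp [atoms] at hC
  | neg A ih => exact ih hC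
  | and A B ih₁ ih₂ | or A B ih₁ ih₂ | imp A B ih₁ ih₂ =>
    rcases List.mem_append.1 hC with h | h
    · exact List.Subset.trans (ih₁ h) (List.subset_append_left _ _)
    · exact List.Subset.trans (ih₂ h) (List.subset_append_right _ _)
  | box A ih =>
    rcases List.mem_cons.1 hC with h | h
    · cases h; exact List.subset_cons_self _ _
    · exact List.Subset.trans (ih h) (List.subset_cons_self _ _)

theorem BoxClosed.atoms_box_subset {L : List MF} (hL : BoxClosed L) {C : MF} (hC : C.box ∈ L) :
    C.box.atoms ⊆ L :=
  List.cons_subset.2 ⟨hC, hL C hC⟩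

namespace ENP

open Function

variable {A B C : MF}

theorem of_peval_imp (hA : ENP A) (h : ∀ u, A.peval u = true → B.peval u = true) : ENP B := by
  refine (ENP.taut fun u => ?_).mp hA
  simp only [MF.peval]
  cases hu : A.peval u
  · rfl
  · simp [h u hu]

theorem and_intro (hA : ENP A) (hB : ENP B) : ENP (A.and B) :=
  ((ENP.taut fun u => by simp only [MF.peval]; cases A.peval u <;> cases B.peval u <;> rfl).mp
    hA).mp hB

/-- Splitting on the truth value of every formula of `L` in turn. -/
theorem of_forall_stateDesc_imp (L : List MF) (h : ∀ v, ENP ((MF.stateDesc v L).imp B)) :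
    ENP B := by
  classical
  induction L with
  | nil => exact (h fun _ => false).mp (ENP.taut fun _ => rfl)
  | cons C L ih =>
    refine ih fun v => ((h (update v C true)).and_intro (h (update v C false))).of_peval_imp
      fun u hu => ?_
    simp only [MF.peval, Bool.and_eq_true, Bool.or_eq_true, Bool.not_eq_true'] at hu ⊢
    refine or_iff_not_imp_left.2 fun hv => ?_
    rw [Bool.not_eq_false, MF.peval_stateDesc] at hv
    have hdesc : (MF.stateDesc (update v C (C.peval u)) (C :: L)).peval u = true := by
      refine MF.peval_stateDesc.2 fun D hD => ?_
      by_cases hDC : D = C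
      · simp [hDC]
      · rw [update_of_ne hDC]
        exact hv D ((List.mem_cons.1 hD).resolve_left hDC)
    cases hC : C.peval u <;> rw [hC] at hdesc
    · exact hu.2.resolve_left (by simp [hdesc])
    · exact hu.1.resolve_left (by simp [hdesc])

end ENP

def Consistent (L : List MF) (v : MF → Bool) : Prop := ¬ENP (MF.stateDesc v L).neg

theorem ENP.of_forall_consistent {L : List MF} {B : MF} (hB : B.atoms ⊆ L)
    (h : ∀ v, Consistent L v → B.peval v = true) : ENP B := by
  refine ENP.of_forall_stateDesc_imp L fun v => ?_
  by_cases hv : Consistent L v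
  · refine ENP.taut fun u => ?_
    simp only [MF.peval, Bool.or_eq_true, Bool.not_eq_true']
    refine or_iff_not_imp_left.2 fun hu => ?_
    rw [MF.peval_eq_of_peval_stateDesc (Bool.not_eq_false _ ▸ hu) hB, h v hv]
  · exact (not_not.1 hv).of_peval_imp fun u hu => by simp_all [MF.peval]

theorem Consistent.peval_eq_true {L : List MF} {v : MF → Bool} {D : MF} (hv : Consistent L v)
    (hD : ENP D) (hDL : D.atoms ⊆ L) : D.peval v = true := by
  by_contra hDv
  refine hv (hD.of_peval_imp fun u hu => ?_)
  simp only [MF.peval, Bool.not_eq_eq_eq_not, Bool.not_true]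
  exact Bool.eq_false_iff.2 fun hχ => hDv (MF.peval_eq_of_peval_stateDesc hχ hDL ▸ hu)

namespace Canonical

variable {L : List MF}

open Classical in
noncomputable def extend (f : {B // B ∈ L} → Bool) (B : MF) : Bool :=
  if h : B ∈ L then f ⟨B, h⟩ else false

theorem extend_of_mem (f : {B // B ∈ L} → Bool) {C : MF} (hC : C ∈ L) :
    extend f C = f ⟨C, hC⟩ :=
  dif_pos hC

def World (L : List MF) : Type := {f : {B // B ∈ L} → Bool // Consistent L (extend f)}

instance : Finite (World L) :=
  have : Finite {B // B ∈ L} := L.finite_toSet.to_subtype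
  Subtype.finite

noncomputable def World.valuation (x : World L) : MF → Bool := extend x.1

noncomputable def World.ofConsistent (v : MF → Bool) (hv : Consistent L v) : World L :=
  ⟨fun B => v B, by rwa [Consistent, MF.stateDesc_congr fun C hC => extend_of_mem _ hC]⟩

theorem World.valuation_ofConsistent {v : MF → Bool} (hv : Consistent L v) {C : MF} (hC : C ∈ L) :
    (World.ofConsistent v hv).valuation C = v C :=
  extend_of_mem _ hC

theorem World.peval_eq_true (x : World L) {D : MF} (hD : ENP D) (hDL : D.atoms ⊆ L) :
    D.peval x.valuation = true :=
  Consistent.peval_eq_true x.2 hD hDL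

theorem _root_.ENP.of_forall_world {B : MF} (hB : B.atoms ⊆ L)
    (h : ∀ x : World L, B.peval x.valuation = true) : ENP B :=
  ENP.of_forall_consistent hB fun v hv => by
    rw [← MF.peval_congr_s3 fun C hC => World.valuation_ofConsistent hv (hB hC)]
    exact h _

variable (L) in
def truthSet (B : MF) : Set (World L) := {x | B.peval x.valuation = true}

variable (L) in
/-- The minimal canonical neighbourhoods, enlarged by `univ` to make an EN-frame. -/
def frame : ENFrame (World L) where
  N x := {S | S = Set.univ ∨ ∃ B, B.box ∈ L ∧ x.valuation B.box = true ∧ S = truthSet L B}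
  univ_mem _ := Or.inl rfl

theorem truthSet_mem_N_iff (hL : BoxClosed L) {C : MF} (hC : C.box ∈ L) (x : World L) :
    truthSet L C ∈ (frame L).N x ↔ x.valuation C.box = true := by
  refine ⟨?_, fun hx => Or.inr ⟨C, hC, hx, rfl⟩⟩
  rintro (huniv | ⟨D, hD, hxD, hCD⟩)
  · have hprov : ENP C := ENP.of_forall_world (hL C hC) (Set.eq_univ_iff_forall.1 huniv)
    exact x.peval_eq_true hprov.nec (hL.atoms_box_subset hC)
  · have hprov : ENP (C.iff D) :=
      ENP.of_forall_world (MF.atoms_iff_subset.2 ⟨hL C hC, hL D hD⟩) fun y => by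
        simpa [truthSet] using Set.ext_iff.1 hCD y
    have := x.peval_eq_true (ENP.re hprov)
      (MF.atoms_iff_subset.2 ⟨hL.atoms_box_subset hC, hL.atoms_box_subset hD⟩)
    rwa [MF.peval_iff_eq_true, MF.peval, MF.peval, hxD] at this

theorem frame_isENP (hL : BoxClosed L) : (frame L).IsENP := by
  rintro x (huniv | ⟨C, hC, hxC, hCempty⟩)
  · exact Set.eq_univ_iff_forall.1 huniv x
  · have hCbot : ENP (C.iff .bot) :=
      ENP.of_forall_world (MF.atoms_iff_subset.2 ⟨hL C hC, List.nil_subset _⟩) fun y => by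
        simpa [truthSet, MF.peval] using Set.ext_iff.1 hCempty y
    have hnC : ENP C.box.neg := ((ENP.re hCbot).and_intro ENP.axP).of_peval_imp fun u hu => by
      simp_all [MF.peval]
    simpa [MF.peval, hxC] using x.peval_eq_true hnC (hL.atoms_box_subset hC)

theorem truth_eq_truthSet (hL : BoxClosed L) {B : MF} (hB : B.atoms ⊆ L) :
    (frame L).truth (fun n => truthSet L (.var n)) B = truthSet L B := by
  induction B with
  | var n => rfl
  | bot => ext; simp [ENFrame.truth, truthSet, MF.peval]
  | neg A ih =>
    rw [ENFrame.truth, ih hB]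
    ext; simp [truthSet, MF.peval]
  | and A B ih₁ ih₂ | or A B ih₁ ih₂ | imp A B ih₁ ih₂ =>
    rw [MF.atoms, List.append_subset] at hB
    rw [ENFrame.truth, ih₁ hB.1, ih₂ hB.2]
    ext
    simp [truthSet, MF.peval, imp_iff_not_or]
  | box A ih =>
    ext x
    rw [ENFrame.truth, ih (List.cons_subset.1 hB).2]
    exact truthSet_mem_N_iff hL (List.cons_subset.1 hB).1 x

end Canonical

/-- Completeness of ENP with respect to finite ENP-frames. -/
theorem ENP_completeness (A : MF)
    (h : ∀ (W : Type) [Nonempty W] [Finite W] (F : ENFrame W), F.IsENP → F.Valid A) :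
    ENP A := by
  refine ENP.of_forall_world (L := A.atoms) (List.Subset.refl _) fun x => ?_
  have : Nonempty (Canonical.World A.atoms) := ⟨x⟩
  have hvalid := h _ (Canonical.frame A.atoms) (Canonical.frame_isENP A.boxClosed_atoms)
    fun n => Canonical.truthSet _ (.var n)
  rw [Canonical.truth_eq_truthSet A.boxClosed_atoms (List.Subset.refl _)] at hvalid
  exact Set.eq_univ_iff_forall.1 hvalid x
end

section
/- Adding the rule Ros to EN yields exactly ENP: a modal formula is derivable in the system obtained from EN by adding the rule Ros (from ¬A infer ¬□A) if and only if it is derivable in the logic ENP (EN plus the axiom ¬□⊥). -/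
/-- The system EN + Ros: EN together with the rule Ros (from ¬A infer ¬□A). -/
inductive ENRos : MF → Prop
  | taut {A : MF} : A.Tautology → ENRos A
  | mp {A B : MF} : ENRos (A.imp B) → ENRos A → ENRos B
  | nec {A : MF} : ENRos A → ENRos A.box
  | re {A B : MF} : ENRos (A.iff B) → ENRos (A.box.iff B.box)
  | ros {A : MF} : ENRos A.neg → ENRos A.box.neg

/-!
Both systems share tautologies, modus ponens, necessitation and RE. In EN + Ros the axiom ¬□⊥
comes from applying Ros to the tautology ¬⊥. Conversely Ros is admissible in ENP: from ¬A one
derives A ↔ ⊥, hence □A ↔ □⊥ by RE, and ¬□⊥ then gives ¬□A.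
-/

namespace MF

theorem tautology_neg_imp_iff_bot (A : MF) : (A.neg.imp (A.iff bot)).Tautology := by
  intro v
  cases hA : A.peval v <;> simp [peval, iff, hA]

theorem tautology_iff_imp_neg_imp_neg (A B : MF) :
    ((A.iff B).imp (B.neg.imp A.neg)).Tautology := by
  intro v
  cases hA : A.peval v <;> cases hB : B.peval v <;> simp [peval, iff, hA, hB]

end MF

theorem ENP.mp_tautology {A B : MF} (hAB : (A.imp B).Tautology) (hA : ENP A) : ENP B :=
  ENP.mp (ENP.taut hAB) hA

theorem ENP.ros {A : MF} (hA : ENP A.neg) : ENP A.box.neg :=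
  have hbox : ENP (A.box.iff MF.bot.box) :=
    ENP.re (ENP.mp_tautology (MF.tautology_neg_imp_iff_bot A) hA)
  ENP.mp (ENP.mp_tautology (MF.tautology_iff_imp_neg_imp_neg _ _) hbox) ENP.axP

theorem ENRos.axP : ENRos MF.bot.box.neg :=
  ENRos.ros (ENRos.taut fun _ => rfl)

/-- Adding the rule Ros to EN yields exactly ENP. -/
theorem ENRos_iff_ENP (A : MF) : ENRos A ↔ ENP A := by
  constructor
  · intro h
    induction h with
    | taut hA => exact ENP.taut hA
    | mp _ _ ihAB ihA => exact ihAB.mp ihA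
    | nec _ ih => exact ih.nec
    | re _ ih => exact ih.re
    | ros _ ih => exact ih.ros
  · intro h
    induction h with
    | taut hA => exact ENRos.taut hA
    | axP => exact ENRos.axP
    | mp _ _ ihAB ihA => exact ihAB.mp ihA
    | nec _ ih => exact ih.nec
    | re _ ih => exact ih.re
end
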